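/- arXiv:0912.5402 — 5 statements merged into one kernel-verified Lean document; each statement's English description precedes it below -/
import Mathlib

section
/- Let v ∈ ℝ^(n+2) be a non-zero light-like vector and v∞ ∈ ℝ^(n+2) a vector with B(v, v∞) ≠ 0. Then the subspace W = {u ∈ ℝ^(n+2) : B(u,v) = 0 and B(u,v∞) = 0} has real dimension n, and the restriction of B to W is positive definite: B(u,u) > 0 for every non-zero u ∈ W. (This is the statement that the tangent space to the conic section S_{v∞} at v is a Euclidean n-space.) -/
/-!
Split off the time coordinate. If `v` is a non-zero null vector its time coordinate `s` is
non-zero, and for `u ⊥ v` with time coordinate `t` the vector `s • u - t • v` is purely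
spatial, with Minkowski square `s ^ 2 * B(u, u)`. Hence `B(u, u) > 0` unless `u` is a
multiple of `v`, which the condition `B(u, v∞) = 0` rules out for `u ≠ 0`. The dimension
count is rank–nullity: `u ↦ (B(u, v), B(u, v∞))` is onto `ℝ²`, since its values at `v` and
`v∞` are `(0, c)` and `(c, B(v∞, v∞))` with `c = B(v, v∞) ≠ 0`.
-/

/-- The Minkowski bilinear form of signature `(n+1, 1)` on `ℝ^(n+2)`. -/
noncomputable def B (n : ℕ) (u v : Fin (n + 2) → ℝ) : ℝ :=
  (∑ i : Fin (n + 1), u i.castSucc * v i.castSucc) -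
    u (Fin.last (n + 1)) * v (Fin.last (n + 1))

section Minkowski

variable {n : ℕ}

lemma B_comm (u v : Fin (n + 2) → ℝ) : B n u v = B n v u := by
  simp only [B, mul_comm]

variable (n) in
noncomputable def minkowskiForm : LinearMap.BilinForm ℝ (Fin (n + 2) → ℝ) :=
  LinearMap.mk₂ ℝ (B n)
    (fun u₁ u₂ v => by simp only [B, Pi.add_apply, add_mul, Finset.sum_add_distrib]; ring)
    (fun c u v => by simp only [B, Pi.smul_apply, smul_eq_mul, mul_sub, Finset.mul_sum, mul_assoc])
    (fun u v₁ v₂ => by simp only [B, Pi.add_apply, mul_add, Finset.sum_add_distrib]; ring)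
    (fun c u v => by
      simp only [B, Pi.smul_apply, smul_eq_mul, mul_sub, Finset.mul_sum, mul_left_comm c])

lemma minkowskiForm_apply (u v : Fin (n + 2) → ℝ) : minkowskiForm n u v = B n u v := rfl

lemma minkowskiForm_flip_apply (v u : Fin (n + 2) → ℝ) :
    (minkowskiForm n).flip v u = B n u v := rfl

lemma B_smul_left (c : ℝ) (u v : Fin (n + 2) → ℝ) : B n (c • u) v = c * B n u v :=
  (minkowskiForm n).map_smul₂ c u v

lemma B_self_pos_of_last_eq_zero {w : Fin (n + 2) → ℝ} (hlast : w (Fin.last (n + 1)) = 0)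
    (hw : w ≠ 0) : 0 < B n w w := by
  obtain ⟨i, hi⟩ := Function.ne_iff.mp hw
  induction i using Fin.lastCases with
  | last => exact absurd hlast hi
  | cast j =>
    simp only [B, hlast, mul_zero, sub_zero]
    exact Finset.sum_pos' (fun _ _ => mul_self_nonneg _)
      ⟨j, Finset.mem_univ _, mul_self_pos.mpr hi⟩

lemma last_ne_zero_of_B_self_eq_zero {v : Fin (n + 2) → ℝ} (hv0 : v ≠ 0)
    (hnull : B n v v = 0) : v (Fin.last (n + 1)) ≠ 0 := fun hlast =>
  (B_self_pos_of_last_eq_zero hlast hv0).ne' hnull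

lemma B_self_pos_of_orthogonal_null {u v : Fin (n + 2) → ℝ} (hv0 : v ≠ 0)
    (hnull : B n v v = 0) (huv : B n u v = 0) (hu : ∀ c : ℝ, c • v ≠ u) : 0 < B n u u := by
  set s := v (Fin.last (n + 1))
  set t := u (Fin.last (n + 1))
  have hs : s ≠ 0 := last_ne_zero_of_B_self_eq_zero hv0 hnull
  have hw_last : (s • u - t • v) (Fin.last (n + 1)) = 0 := by
    simp only [Pi.sub_apply, Pi.smul_apply, smul_eq_mul, s, t]; ring
  have hw0 : s • u - t • v ≠ 0 := fun hw => hu (t / s) <| by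
    rw [sub_eq_zero] at hw
    rw [div_eq_inv_mul, mul_smul, ← hw, inv_smul_smul₀ hs]
  have hw : B n (s • u - t • v) (s • u - t • v) = s ^ 2 * B n u u := by
    simp only [← minkowskiForm_apply, map_sub, map_smul, LinearMap.sub_apply,
      LinearMap.smul_apply, smul_eq_mul]
    simp only [minkowskiForm_apply, B_comm v u, huv, hnull]
    ring
  exact pos_of_mul_pos_right (hw ▸ B_self_pos_of_last_eq_zero hw_last hw0) (sq_nonneg s)

lemma surjective_minkowskiForm_flip_prod {v vinf : Fin (n + 2) → ℝ} (hnull : B n v v = 0)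
    (hvinf : B n v vinf ≠ 0) :
    Function.Surjective (((minkowskiForm n).flip v).prod ((minkowskiForm n).flip vinf)) := by
  rintro ⟨a, b⟩
  refine
    ⟨((b - a / B n v vinf * B n vinf vinf) / B n v vinf) • v + (a / B n v vinf) • vinf, ?_⟩
  simp only [map_add, map_smul, LinearMap.prod_apply, Function.prod_apply,
    minkowskiForm_flip_apply, B_comm vinf v, hnull, Prod.smul_mk, Prod.mk_add_mk, smul_eq_mul,
    Prod.mk.injEq]
  constructor <;> field_simp <;> ring

lemma finrank_ker_minkowskiForm_flip_prod {v vinf : Fin (n + 2) → ℝ} (hnull : B n v v = 0)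
    (hvinf : B n v vinf ≠ 0) :
    Module.finrank ℝ
      (LinearMap.ker (((minkowskiForm n).flip v).prod ((minkowskiForm n).flip vinf))) = n := by
  have h := LinearMap.finrank_range_add_finrank_ker
    (((minkowskiForm n).flip v).prod ((minkowskiForm n).flip vinf))
  rw [LinearMap.range_eq_top.mpr (surjective_minkowskiForm_flip_prod hnull hvinf), finrank_top,
    Module.finrank_prod, Module.finrank_self, Module.finrank_fin_fun] at h
  omega

end Minkowski

/-- For a non-zero light-like `v` and `v∞` with `B(v,v∞) ≠ 0`, the subspace
`W = {u : B(u,v) = 0 ∧ B(u,v∞) = 0}` has dimension `n` and the restriction of `B` to `W`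
is positive definite. -/
theorem statement2 (n : ℕ) (v vinf : Fin (n + 2) → ℝ)
    (hv0 : v ≠ 0) (hnull : B n v v = 0) (hvinf : B n v vinf ≠ 0)
    (W : Submodule ℝ (Fin (n + 2) → ℝ))
    (hW : ∀ u, u ∈ W ↔ (B n u v = 0 ∧ B n u vinf = 0)) :
    Module.finrank ℝ W = n ∧ ∀ u ∈ W, u ≠ 0 → 0 < B n u u := by
  have hW_ker :
      W = LinearMap.ker (((minkowskiForm n).flip v).prod ((minkowskiForm n).flip vinf)) := by
    ext u
    simp only [hW, LinearMap.mem_ker, LinearMap.prod_apply, Function.prod_apply,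
      minkowskiForm_flip_apply, Prod.mk_eq_zero]
  refine ⟨hW_ker ▸ finrank_ker_minkowskiForm_flip_prod hnull hvinf, fun u hu hu0 => ?_⟩
  obtain ⟨huv, huvinf⟩ := (hW u).mp hu
  refine B_self_pos_of_orthogonal_null hv0 hnull huv fun c hc => hu0 ?_
  have hc_vinf : c * B n v vinf = 0 := by rw [← huvinf, ← hc, B_smul_left]
  rw [← hc, (mul_eq_zero.mp hc_vinf).resolve_right hvinf, zero_smul]
end

section
/- Let v ∈ ℝ^(n+2) be a non-zero light-like vector. Then the restriction of B to the B-orthogonal complement of v is positive semidefinite with radical spanned by v: for every u with B(u,v) = 0 one has B(u,u) ≥ 0, and if moreover B(u,u) = 0 then u ∈ Submodule.span ℝ {v}. -/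
/-- For a non-zero light-like `v`, the restriction of `B` to the `B`-orthogonal complement
of `v` is positive semidefinite with radical spanned by `v`. -/
theorem statement3 (n : ℕ) (v : Fin (n + 2) → ℝ)
    (hv0 : v ≠ 0) (hnull : B n v v = 0) :
    ∀ u : Fin (n + 2) → ℝ, B n u v = 0 →
      0 ≤ B n u u ∧ (B n u u = 0 → u ∈ Submodule.span ℝ {v}) := by
  intro u hu
  set t := v (Fin.last (n + 1)) with ht
  set s := u (Fin.last (n + 1)) with hs
  have hnull' : ∑ i : Fin (n + 1), v i.castSucc * v i.castSucc = t * t := by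
    unfold B at hnull; linarith
  have hu' : ∑ i : Fin (n + 1), u i.castSucc * v i.castSucc = s * t := by
    unfold B at hu; linarith
  -- t ≠ 0
  have htne : t ≠ 0 := by
    intro h0
    apply hv0
    have hz : ∑ i : Fin (n + 1), v i.castSucc * v i.castSucc = 0 := by
      rw [hnull', h0]; ring
    have hall : ∀ i ∈ Finset.univ, v (Fin.castSucc i) * v (Fin.castSucc i) = 0 := by
      intro i _
      have := Finset.sum_eq_zero_iff_of_nonneg
        (fun i _ => mul_self_nonneg (v (Fin.castSucc i))) |>.mp hz
      exact this i (Finset.mem_univ i)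
    funext j
    refine Fin.lastCases ?_ ?_ j
    · simpa using h0
    · intro i
      have := hall i (Finset.mem_univ i)
      have := mul_self_eq_zero.mp this
      simpa using this
  have hkey : ∑ i : Fin (n + 1), (t * u i.castSucc - s * v i.castSucc)^2
      = t^2 * B n u u := by
    have expand : ∀ i : Fin (n + 1), (t * u i.castSucc - s * v i.castSucc)^2
        = t^2 * (u i.castSucc * u i.castSucc)
          - 2*t*s * (u i.castSucc * v i.castSucc)
          + s^2 * (v i.castSucc * v i.castSucc) := fun i => by ring
    rw [Finset.sum_congr rfl fun i _ => expand i]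
    rw [Finset.sum_add_distrib, Finset.sum_sub_distrib, ← Finset.mul_sum,
      ← Finset.mul_sum, ← Finset.mul_sum, hu', hnull']
    unfold B
    ring
  have hsumnn : 0 ≤ ∑ i : Fin (n + 1), (t * u i.castSucc - s * v i.castSucc)^2 :=
    Finset.sum_nonneg fun i _ => sq_nonneg _
  have htpos : 0 < t^2 := by positivity
  constructor
  · nlinarith [hkey, hsumnn, htpos]
  · intro hBu
    have hz : ∑ i : Fin (n + 1), (t * u i.castSucc - s * v i.castSucc)^2 = 0 := by
      rw [hkey, hBu]; ring
    have hall := Finset.sum_eq_zero_iff_of_nonneg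
      (fun i _ => sq_nonneg (t * u i.castSucc - s * v i.castSucc)) |>.mp hz
    refine Submodule.mem_span_singleton.mpr ⟨s / t, ?_⟩
    funext j
    refine Fin.lastCases ?_ ?_ j
    · simp only [Pi.smul_apply, smul_eq_mul, ← ht, ← hs]
      field_simp
    · intro i
      have h0 := hall i (Finset.mem_univ i)
      have h1 : t * u (Fin.castSucc i) - s * v (Fin.castSucc i) = 0 := by
        exact pow_eq_zero_iff (by norm_num) |>.mp h0
      simp only [Pi.smul_apply, smul_eq_mul]
      field_simp
      linarith [h1]
end

section
/- Let V be a finite-dimensional complex vector space carrying a quaternionic structure j, and let ξ : V → V be ℂ-linear with ξ ∘ j = j ∘ ξ and ξ ∘ ξ = a·id for some real number a < 0. Set μ := i·√(−a) and E := ker(ξ − μ·id). Then V is the internal direct sum of E and j(E), one has j(E) = ker(ξ + μ·id), and dim_ℂ E = (dim_ℂ V)/2. (In particular, for V = ℂ⁴, ξ equals μ·id on a 2-plane W and (conj μ)·id = −μ·id on jW, with ℂ⁴ = W ⊕ jW and W non-j-stable.) -/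
/-- Let `ξ` commute with a quaternionic structure `j` and satisfy `ξ² = a·id` with
`a < 0` real. With `μ := i·√(-a)`, `E := ker(ξ - μ·id)` and `F := ker(ξ + μ·id)`, one has
`F = j(E)`, `V` is the internal direct sum of `E` and `F = j(E)`, and
`dim_ℂ E = (dim_ℂ V)/2`. -/
theorem statement14 (V : Type*) [AddCommGroup V] [Module ℂ V] [FiniteDimensional ℂ V]
    (j : V →ₛₗ[starRingEnd ℂ] V) (hj : ∀ v, j (j v) = -v)
    (ξ : V →ₗ[ℂ] V) (hcomm : ∀ v, ξ (j v) = j (ξ v))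
    (a : ℝ) (ha : a < 0) (hξ2 : ∀ v, ξ (ξ v) = (a : ℂ) • v)
    (E F : Submodule ℂ V)
    (hE : ∀ v, v ∈ E ↔ ξ v = (Complex.I * (Real.sqrt (-a) : ℂ)) • v)
    (hF : ∀ v, v ∈ F ↔ ξ v = -((Complex.I * (Real.sqrt (-a) : ℂ)) • v)) :
    (F : Set V) = ⇑j '' (E : Set V) ∧ IsCompl E F ∧
      2 * Module.finrank ℂ E = Module.finrank ℂ V := by
  set s : ℝ := Real.sqrt (-a) with hs
  set μ : ℂ := Complex.I * (s : ℂ) with hμdef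
  have hspos : (0:ℝ) < s := Real.sqrt_pos.mpr (by linarith)
  have hμ0 : μ ≠ 0 := by
    simp [hμdef, Complex.I_ne_zero, Complex.ofReal_ne_zero, hspos.ne']
  have hμsq : μ * μ = (a : ℂ) := by
    have h1 : (s:ℂ) * (s:ℂ) = ((-a : ℝ) : ℂ) := by
      norm_cast
      exact Real.mul_self_sqrt (by linarith)
    calc μ * μ = (Complex.I * Complex.I) * ((s:ℂ) * (s:ℂ)) := by ring
      _ = (a : ℂ) := by rw [Complex.I_mul_I, h1]; push_cast; ring
  have hconj : (starRingEnd ℂ) μ = -μ := by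
    simp [hμdef, Complex.conj_ofReal]
  -- j maps E to F and F to E (via -j)
  have hjE : ∀ v, v ∈ E → j v ∈ F := by
    intro v hv
    rw [hE] at hv
    rw [hF, hcomm, hv, map_smulₛₗ, hconj, neg_smul]
  have hjF : ∀ v, v ∈ F → -(j v) ∈ E := by
    intro v hv
    rw [hF] at hv
    rw [hE]
    rw [map_neg, hcomm, hv, map_neg, map_smulₛₗ, hconj]
    simp
  have hFE : (F : Set V) = ⇑j '' (E : Set V) := by
    ext v
    constructor
    · intro hv
      refine ⟨-(j v), hjF v hv, ?_⟩
      rw [map_neg, hj, neg_neg]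
    · rintro ⟨w, hw, rfl⟩
      exact hjE w hw
  have h2μ : (2 : ℂ) * μ ≠ 0 := mul_ne_zero two_ne_zero hμ0
  have hdisj : Disjoint E F := by
    rw [Submodule.disjoint_def]
    intro v hvE hvF
    rw [hE] at hvE
    rw [hF] at hvF
    have h2 : μ • v + μ • v = 0 := by
      nth_rewrite 1 [hvE.symm.trans hvF]
      abel
    have h3 : (μ + μ) • v = 0 := by rw [add_smul]; exact h2
    rcases smul_eq_zero.mp h3 with h | h
    · exact absurd h (by simpa [two_mul] using h2μ)
    · exact h
  have hcodisj : Codisjoint E F := by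
    rw [codisjoint_iff, eq_top_iff]
    intro v _
    show v ∈ E ⊔ F
    have hx : (2*μ)⁻¹ • (ξ v + μ • v) ∈ E := by
      rw [hE, map_smul, map_add, map_smul, hξ2, ← hμsq]
      match_scalars <;> field_simp <;> ring
    have hy : (2*μ)⁻¹ • (μ • v - ξ v) ∈ F := by
      rw [hF, map_smul, map_sub, map_smul, hξ2, ← hμsq]
      match_scalars <;> field_simp <;> ring
    have hsum : (2*μ)⁻¹ • (ξ v + μ • v) + (2*μ)⁻¹ • (μ • v - ξ v) = v := by
      rw [← smul_add]
      have h4 : ξ v + μ • v + (μ • v - ξ v) = (2*μ) • v := by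
        rw [two_mul, add_smul]; abel
      rw [h4, smul_smul, inv_mul_cancel₀ h2μ, one_smul]
    exact Submodule.mem_sup.mpr ⟨_, hx, _, hy, hsum⟩
  have hcompl : IsCompl E F := ⟨hdisj, hcodisj⟩
  let e : E ≃ₗ[ℝ] F :=
    { toFun := fun x => ⟨j x, hjE x x.2⟩
      map_add' := by intro x y; ext; simp
      map_smul' := fun r x => by
        ext
        show j ((r : ℝ) • (x : V)) = (r : ℝ) • (j (x : V))
        rw [← IsScalarTower.algebraMap_smul ℂ r (x : V),
          ← IsScalarTower.algebraMap_smul ℂ r (j (x : V)), map_smulₛₗ]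
        simp [Complex.conj_ofReal]
      invFun := fun y => ⟨-(j y), hjF y y.2⟩
      left_inv := by intro x; ext; simp [hj]
      right_inv := by intro y; ext; simp [hj] }
  have hr : Module.finrank ℝ E = Module.finrank ℝ F := e.finrank_eq
  have h2E : Module.finrank ℝ ℂ * Module.finrank ℂ E = Module.finrank ℝ E :=
    Module.finrank_mul_finrank ℝ ℂ E
  have h2F : Module.finrank ℝ ℂ * Module.finrank ℂ F = Module.finrank ℝ F :=
    Module.finrank_mul_finrank ℝ ℂ F
  have hrc : Module.finrank ℝ ℂ = 2 := Complex.finrank_real_complex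
  have hadd : Module.finrank ℂ E + Module.finrank ℂ F = Module.finrank ℂ V :=
    Submodule.finrank_add_eq_of_isCompl hcompl
  rw [hrc] at h2E h2F
  refine ⟨hFE, hcompl, ?_⟩
  omega
end

section
/- Let j : ℂ⁴ → ℂ⁴ be the conjugate-linear map j(z₁,z₂,z₃,z₄) = (−conj z₃, conj z₄, conj z₁, −conj z₂) (a quaternionic structure: j ∘ j = −id). Then for all v₁, v₂ ∈ ℂ⁴, the determinant of the 4×4 complex matrix whose columns are v₁, v₂, j v₁, j v₂ is a real number that is ≤ 0, and it is < 0 whenever v₁, v₂, j v₁, j v₂ are linearly independent over ℂ. (This sign-constancy underlies the normalization det(v₁,v₂,jv₁,jv₂) > 0 for the determinant form det with det ∘ ∧⁴j conjugate to det, used to define the metric (v₁∧v₂, v₃∧v₄) := −det(v₁,v₂,v₃,v₄) on ∧²ℂ⁴.) -/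
/-!
In the Plücker coordinates `pᵢⱼ = v₁ᵢ v₂ⱼ - v₁ⱼ v₂ᵢ` of `v₁ ∧ v₂`, expanding the determinant gives
`det(v₁, v₂, j v₁, j v₂) = -(|p₀₁|² + |p₂₃|² + |p₀₃|² + |p₁₂|² + 2 Re(conj p₀₂ · p₁₃))`, which is real.
By the Plücker relation `p₀₂ p₁₃ = p₀₁ p₂₃ + p₀₃ p₁₂` and AM-GM, the cross term is at most
the sum of the four squares in absolute value, so the determinant is `≤ 0`; it is nonzero,
hence `< 0`, when the columns are independent.
-/

/-- The quaternionic structure on `ℂ⁴ ≅ ℍ²`: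
`j(z₁,z₂,z₃,z₄) = (-conj z₃, conj z₄, conj z₁, -conj z₂)`. -/
noncomputable def Jq (v : Fin 4 → ℂ) : Fin 4 → ℂ :=
  ![-(starRingEnd ℂ) (v 2), (starRingEnd ℂ) (v 3), (starRingEnd ℂ) (v 0),
    -(starRingEnd ℂ) (v 1)]

open ComplexConjugate

theorem Matrix.det_fin_four {R : Type*} [CommRing R] (A : Matrix (Fin 4) (Fin 4) R) :
    A.det =
      A 0 0 * (A 1 1 * A 2 2 * A 3 3 - A 1 1 * A 2 3 * A 3 2 - A 1 2 * A 2 1 * A 3 3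
        + A 1 2 * A 2 3 * A 3 1 + A 1 3 * A 2 1 * A 3 2 - A 1 3 * A 2 2 * A 3 1)
      - A 0 1 * (A 1 0 * A 2 2 * A 3 3 - A 1 0 * A 2 3 * A 3 2 - A 1 2 * A 2 0 * A 3 3
        + A 1 2 * A 2 3 * A 3 0 + A 1 3 * A 2 0 * A 3 2 - A 1 3 * A 2 2 * A 3 0)
      + A 0 2 * (A 1 0 * A 2 1 * A 3 3 - A 1 0 * A 2 3 * A 3 1 - A 1 1 * A 2 0 * A 3 3
        + A 1 1 * A 2 3 * A 3 0 + A 1 3 * A 2 0 * A 3 1 - A 1 3 * A 2 1 * A 3 0)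
      - A 0 3 * (A 1 0 * A 2 1 * A 3 2 - A 1 0 * A 2 2 * A 3 1 - A 1 1 * A 2 0 * A 3 2
        + A 1 1 * A 2 2 * A 3 0 + A 1 2 * A 2 0 * A 3 1 - A 1 2 * A 2 1 * A 3 0) := by
  rw [det_succ_row_zero, Fin.sum_univ_four]
  simp only [det_fin_three, submatrix_apply, Fin.succAbove, Fin.lt_def, Fin.succ_zero_eq_one,
    Fin.succ_one_eq_two, Fin.reduceSucc, Fin.castSucc_zero, Fin.castSucc_one, Fin.reduceCastSucc]
  norm_num
  ring

def plucker {ι R : Type*} [CommRing R] (v w : ι → R) (i j : ι) : R := v i * w j - v j * w i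

theorem plucker_mul_plucker {ι R : Type*} [CommRing R] (v w : ι → R) (i j k l : ι) :
    plucker v w i k * plucker v w j l =
      plucker v w i j * plucker v w k l + plucker v w i l * plucker v w j k := by
  simp only [plucker]
  ring

theorem two_mul_norm_mul_add_mul_le {R : Type*} [SeminormedRing R] (a b c d : R) :
    2 * ‖a * b + c * d‖ ≤ ‖a‖ ^ 2 + ‖b‖ ^ 2 + ‖c‖ ^ 2 + ‖d‖ ^ 2 := by
  nlinarith [norm_add_le (a * b) (c * d), norm_mul_le a b, norm_mul_le c d,
    sq_nonneg (‖a‖ - ‖b‖), sq_nonneg (‖c‖ - ‖d‖)]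

theorem Complex.neg_norm_mul_le_re_conj_mul (z w : ℂ) : -‖z * w‖ ≤ (conj z * w).re := by
  simpa using (abs_le.mp (abs_re_le_norm (conj z * w))).1

noncomputable def detJq (v w : Fin 4 → ℂ) : ℝ :=
  -(‖plucker v w 0 1‖ ^ 2 + ‖plucker v w 2 3‖ ^ 2 + ‖plucker v w 0 3‖ ^ 2 +
    ‖plucker v w 1 2‖ ^ 2 + 2 * (conj (plucker v w 0 2) * plucker v w 1 3).re)

theorem det_cols_Jq (v w : Fin 4 → ℂ) :
    (Matrix.of fun i k : Fin 4 => ![v, w, Jq v, Jq w] k i).det = detJq v w := by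
  have hexpand : (Matrix.of fun i k : Fin 4 => ![v, w, Jq v, Jq w] k i).det =
      -(conj (plucker v w 0 1) * plucker v w 0 1 + conj (plucker v w 2 3) * plucker v w 2 3 +
        conj (plucker v w 0 3) * plucker v w 0 3 + conj (plucker v w 1 2) * plucker v w 1 2 +
        (conj (plucker v w 0 2) * plucker v w 1 3 +
          conj (conj (plucker v w 0 2) * plucker v w 1 3))) := by
    rw [Matrix.det_fin_four]
    simp only [Matrix.of_apply, Jq, plucker, Matrix.cons_val_zero, Matrix.cons_val_one,
      Matrix.head_cons, Matrix.cons_val_two, Matrix.tail_cons, Matrix.cons_val_three, map_sub,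
      map_mul, Complex.conj_conj]
    ring
  rw [hexpand, Complex.add_conj, detJq]
  simp only [Complex.conj_mul']
  push_cast
  ring

theorem detJq_nonpos (v w : Fin 4 → ℂ) : detJq v w ≤ 0 := by
  have hcross := Complex.neg_norm_mul_le_re_conj_mul (plucker v w 0 2) (plucker v w 1 3)
  have hsquares := two_mul_norm_mul_add_mul_le (plucker v w 0 1) (plucker v w 2 3)
    (plucker v w 0 3) (plucker v w 1 2)
  rw [← plucker_mul_plucker] at hsquares
  rw [detJq]
  linarith

/-- The determinant of the matrix with columns `v₁, v₂, j v₁, j v₂` is a real number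
`≤ 0`, and it is `< 0` whenever the four columns are linearly independent. -/
theorem statement15 (v₁ v₂ : Fin 4 → ℂ) :
    ∃ r : ℝ,
      (Matrix.of fun i k : Fin 4 => ![v₁, v₂, Jq v₁, Jq v₂] k i).det = (r : ℂ) ∧
        r ≤ 0 ∧
        (LinearIndependent ℂ ![v₁, v₂, Jq v₁, Jq v₂] → r < 0) := by
  refine ⟨detJq v₁ v₂, det_cols_Jq v₁ v₂, detJq_nonpos v₁ v₂, fun hli => ?_⟩
  have hdet : (Matrix.of fun i k : Fin 4 => ![v₁, v₂, Jq v₁, Jq v₂] k i).det ≠ 0 :=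
    ((Matrix.isUnit_iff_isUnit_det _).mp (Matrix.linearIndependent_cols_iff_isUnit.mp hli)).ne_zero
  rw [det_cols_Jq, Complex.ofReal_ne_zero] at hdet
  exact (detJq_nonpos v₁ v₂).lt_of_ne hdet
end

section
/- Let A be an associative ring that is an ℝ-algebra, let S ∈ A, and let W be a 2-dimensional real vector space equipped with a linear map J : W → W satisfying J ∘ J = −id. Suppose ξ₁, ξ₂ : W → A are ℝ-linear maps such that ξ₁(J w) = −(ξ₁ w)·S for all w (ξ₁ is of right-K type, i.e. *ξ₁ = ξ₁·S) and ξ₂(J w) = −S·(ξ₂ w) for all w (ξ₂ is of left-K type, i.e. *ξ₂ = S·ξ₂). Then (ξ₁ u)·(ξ₂ v) − (ξ₁ v)·(ξ₂ u) = 0 for all u, v ∈ W; that is, the A-valued 2-form ξ₁ ∧ ξ₂ vanishes. -/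
/-- The wedge product of an `A`-valued 1-form of right-`K` type with one of left-`K` type
vanishes: if `W` is `2`-dimensional with complex structure `J`, and `ξ₁(Jw) = -ξ₁(w)·S`,
`ξ₂(Jw) = -S·ξ₂(w)` for all `w`, then `ξ₁(u)ξ₂(v) - ξ₁(v)ξ₂(u) = 0` for all `u, v`. -/
theorem statement18 (A : Type*) [Ring A] [Algebra ℝ A] (S : A)
    (W : Type*) [AddCommGroup W] [Module ℝ W] (hW : Module.finrank ℝ W = 2)
    (J : W →ₗ[ℝ] W) (hJ : ∀ w, J (J w) = -w)
    (ξ₁ ξ₂ : W →ₗ[ℝ] A)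
    (h₁ : ∀ w, ξ₁ (J w) = -(ξ₁ w * S))
    (h₂ : ∀ w, ξ₂ (J w) = -(S * ξ₂ w)) :
    ∀ u v : W, ξ₁ u * ξ₂ v - ξ₁ v * ξ₂ u = 0 := by
  intro u v
  by_cases hu : u = 0
  · simp [hu]
  -- u and J u are linearly independent
  have hind : LinearIndependent ℝ ![u, J u] := by
    rw [LinearIndependent.pair_iff]
    intro s t hst
    have h2' : s • J u + t • J (J u) = 0 := by
      have := congrArg J hst
      simpa [map_add, map_smul] using this
    rw [hJ] at h2'
    have key : (s * s + t * t) • u = 0 := by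
      linear_combination (norm := module) s • hst - t • h2'
    rcases smul_eq_zero.mp key with h | h
    · constructor <;> nlinarith
    · exact absurd h hu
  -- span of u, J u is everything
  have : FiniteDimensional ℝ W := Module.finite_of_finrank_eq_succ hW
  have hspan : Submodule.span ℝ {u, J u} = ⊤ := by
    have hs : Submodule.span ℝ (Set.range ![u, J u]) = ⊤ := by
      apply Submodule.eq_top_of_finrank_eq
      rw [finrank_span_eq_card hind, hW]
      simp
    rwa [Matrix.range_cons, Matrix.range_cons, Matrix.range_empty, Set.union_empty] at hs
  have hv : v ∈ Submodule.span ℝ {u, J u} := hspan ▸ Submodule.mem_top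
  obtain ⟨a, b, hab⟩ := Submodule.mem_span_pair.mp hv
  subst hab
  simp only [map_add, map_smul, h₁, h₂, smul_neg, smul_mul_assoc, mul_smul_comm,
    neg_mul, mul_neg, mul_assoc, mul_add, add_mul]
  abel
end
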